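/- An ambiguous split graph is a Helly circular-arc graph if and only if it is a circular-arc graph. -/

import Mathlib

namespace CAG

variable {V : Type*}

/-- The circle on which circular-arc models live. -/
abbrev Circle : Type := AddCircle (1 : ℝ)

/-- The closed arc of the circle starting at `s` and going a length `ℓ` in the
positive direction. -/
def circleArc (s ℓ : ℝ) : Set Circle :=
  (fun x : ℝ => (x : Circle)) '' Set.Icc s (s + ℓ)

/-- A circular-arc model of a graph `G`: an assignment of nonempty closed arcs of the
circle to vertices such that two distinct vertices are adjacent iff their arcs meet. -/
structure CircularArcModel (G : SimpleGraph V) where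
  arc : V → Set Circle
  isArc : ∀ v : V, ∃ s ℓ : ℝ, 0 ≤ ℓ ∧ arc v = circleArc s ℓ
  adj_iff : ∀ u v : V, u ≠ v → (G.Adj u v ↔ (arc u ∩ arc v).Nonempty)

/-- A graph is a circular-arc graph if it has a circular-arc model. -/
def IsCircularArcGraph (G : SimpleGraph V) : Prop := Nonempty (CircularArcModel G)

/-- An interval model of a graph `G`: an assignment of nonempty closed real intervals
to vertices such that two distinct vertices are adjacent iff their intervals meet. -/
structure IntervalModel (G : SimpleGraph V) where
  lo : V → ℝ
  hi : V → ℝ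
  lo_le_hi : ∀ v : V, lo v ≤ hi v
  adj_iff : ∀ u v : V, u ≠ v →
    (G.Adj u v ↔ (Set.Icc (lo u) (hi u) ∩ Set.Icc (lo v) (hi v)).Nonempty)

/-- The interval assigned to a vertex by an interval model. -/
def IntervalModel.ival {G : SimpleGraph V} (M : IntervalModel G) (v : V) : Set ℝ :=
  Set.Icc (M.lo v) (M.hi v)

/-- A graph is an interval graph if it has an interval model. -/
def IsIntervalGraph (G : SimpleGraph V) : Prop := Nonempty (IntervalModel G)

/-- The closed neighbourhood `N[v]` of a vertex. -/
def closedNbhd (G : SimpleGraph V) (v : V) : Set V := insert v (G.neighborSet v)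

/-- A vertex is simplicial if its closed neighbourhood is a clique. -/
def IsSimplicial (G : SimpleGraph V) (v : V) : Prop := G.IsClique (closedNbhd G v)

/-- The cycle graph on `n` vertices. -/
def cycleG (n : ℕ) : SimpleGraph (Fin n) :=
  SimpleGraph.fromRel (fun a b => (a.val + 1) % n = b.val)

/-- `G` contains an induced copy of `F`. -/
def InducedCopy {W : Type*} (F : SimpleGraph W) (G : SimpleGraph V) : Prop :=
  Nonempty (F ↪g G)

/-- A graph is chordal if it has no induced cycle of length at least 4. -/
def Chordal (G : SimpleGraph V) : Prop :=
  ∀ n : ℕ, 4 ≤ n → ¬ InducedCopy (cycleG n) G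

/-- The adjacency relation of the auxiliary graph `G^K`. -/
def auxAdj (G : SimpleGraph V) (K : Set V) (u v : V) : Prop :=
  (u ∈ K ∧ v ∈ K ∧ G.neighborSet u ∪ G.neighborSet v ≠ Set.univ) ∨
  (u ∉ K ∧ v ∉ K ∧ G.Adj u v) ∨
  (u ∈ K ∧ v ∉ K ∧ ¬ closedNbhd G v ⊆ closedNbhd G u) ∨
  (v ∈ K ∧ u ∉ K ∧ ¬ closedNbhd G u ⊆ closedNbhd G v)

/-- The auxiliary graph `G^K` associated with a graph `G` and a clique `K`. -/
def auxGraph (G : SimpleGraph V) (K : Set V) : SimpleGraph V where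
  Adj u v := u ≠ v ∧ auxAdj G K u v
  symm := ⟨by
    rintro u v ⟨hne, h⟩
    refine ⟨hne.symm, ?_⟩
    rcases h with ⟨h1, h2, h3⟩ | ⟨h1, h2, h3⟩ | ⟨h1, h2, h3⟩ | ⟨h1, h2, h3⟩
    · exact Or.inl ⟨h2, h1, by rwa [Set.union_comm]⟩
    · exact Or.inr <| Or.inl ⟨h2, h1, h3.symm⟩
    · exact Or.inr <| Or.inr <| Or.inr ⟨h1, h2, h3⟩
    · exact Or.inr <| Or.inr <| Or.inl ⟨h1, h2, h3⟩⟩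
  loopless := ⟨fun _ h => h.1 rfl⟩

/-- Condition (♯): `G^K` admits an interval model in which, for every `v ∈ K` and
`u ∉ K`, the interval of `v` contains the interval of `u` iff `u` and `v` are not
adjacent in `G`. -/
def SatisfiesSharp (G : SimpleGraph V) (K : Set V) : Prop :=
  ∃ M : IntervalModel (auxGraph G K),
    ∀ v ∈ K, ∀ u ∉ K, (M.ival u ⊆ M.ival v ↔ ¬ G.Adj v u)

/-- An independent set of a graph. -/
def IsIndependentSet (G : SimpleGraph V) (s : Set V) : Prop :=
  ∀ ⦃u⦄, u ∈ s → ∀ ⦃v⦄, v ∈ s → u ≠ v → ¬ G.Adj u v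

/-- A split partition: a partition of the vertex set into a clique and an independent set. -/
def IsSplitPartition (G : SimpleGraph V) (K S : Set V) : Prop :=
  K ∪ S = Set.univ ∧ Disjoint K S ∧ G.IsClique K ∧ IsIndependentSet G S

/-- A split graph. -/
def IsSplitGraph (G : SimpleGraph V) : Prop := ∃ K S : Set V, IsSplitPartition G K S

/-- A split graph is ambiguous if it has two distinct split partitions. -/
def Ambiguous (G : SimpleGraph V) : Prop :=
  ∃ K₁ S₁ K₂ S₂ : Set V, IsSplitPartition G K₁ S₁ ∧ IsSplitPartition G K₂ S₂ ∧
    (K₁, S₁) ≠ (K₂, S₂)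

/-- A maximal clique (as a set of vertices). -/
def IsMaxCliqueSet (G : SimpleGraph V) (C : Set V) : Prop :=
  G.IsClique C ∧ ∀ C' : Set V, G.IsClique C' → C ⊆ C' → C = C'

/-- A Helly circular-arc graph: one admitting a circular-arc model in which the arcs of
every maximal clique have a common point. -/
def IsHellyCircularArcGraph (G : SimpleGraph V) : Prop :=
  ∃ M : CircularArcModel G, ∀ C : Set V, IsMaxCliqueSet G C →
    ∃ p : Circle, ∀ v ∈ C, p ∈ M.arc v

/-- The edge `ab` lies on an induced 4-cycle. -/
def EdgeOnInducedC4 (G : SimpleGraph V) (a b : V) : Prop :=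
  ∃ c d : V, a ≠ c ∧ b ≠ d ∧ G.Adj a b ∧ G.Adj b c ∧ G.Adj c d ∧ G.Adj d a ∧
    ¬ G.Adj a c ∧ ¬ G.Adj b d

/-- A normalized circular-arc model. -/
def IsNormalized {G : SimpleGraph V} (M : CircularArcModel G) : Prop :=
  ∀ v₁ v₂ : V, G.Adj v₁ v₂ →
    (closedNbhd G v₂ ⊆ closedNbhd G v₁ → M.arc v₂ ⊆ M.arc v₁) ∧
    (G.neighborSet v₁ ∪ G.neighborSet v₂ = Set.univ → ¬ EdgeOnInducedC4 G v₁ v₂ →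
      M.arc v₁ ∪ M.arc v₂ = Set.univ)

/-- A universal vertex: a vertex adjacent to all other vertices. -/
def HasUniversalVertex (G : SimpleGraph V) : Prop :=
  ∃ v : V, ∀ u : V, u ≠ v → G.Adj v u

/-- `w` is a witness of the set `X ⊆ K`: a vertex of `S` adjacent in `G^K` to all of `X`. -/
def WitnessOf (G : SimpleGraph V) (K S : Set V) (w : V) (X : Set V) : Prop :=
  w ∈ S ∧ ∀ x ∈ X, (auxGraph G K).Adj w x

/-- A set `X` is witnessed if it has a witness. -/
def Witnessed (G : SimpleGraph V) (K S : Set V) (X : Set V) : Prop :=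
  ∃ w : V, WitnessOf G K S w X

/-- The induced subgraph of `G^K` on the vertex set `F` is witnessed: every maximal
clique of this subgraph that is disjoint from `S` is witnessed. -/
def WitnessedCopy (G : SimpleGraph V) (K S F : Set V) : Prop :=
  ∀ C ⊆ F, (auxGraph G K).IsClique C →
    (∀ C' ⊆ F, (auxGraph G K).IsClique C' → C ⊆ C' → C = C') →
    Disjoint C S → Witnessed G K S C

/-- The sun: a triangle 0,1,2 together with degree-two vertices 3 (adjacent to 0,1),
4 (adjacent to 1,2) and 5 (adjacent to 0,2). -/
def sunF : SimpleGraph (Fin 6) :=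
  SimpleGraph.fromRel (fun a b =>
    (a = 0 ∧ b = 1) ∨ (a = 0 ∧ b = 2) ∨ (a = 1 ∧ b = 2) ∨
    (a = 3 ∧ (b = 0 ∨ b = 1)) ∨ (a = 4 ∧ (b = 1 ∨ b = 2)) ∨ (a = 5 ∧ (b = 0 ∨ b = 2)))

/-- The long claw: centre 0 adjacent to 1,2,3; pendant vertices 4,5,6 attached to
1,2,3 respectively. -/
def longClaw : SimpleGraph (Fin 7) :=
  SimpleGraph.fromRel (fun a b =>
    (a = 0 ∧ (b = 1 ∨ b = 2 ∨ b = 3)) ∨ (a = 1 ∧ b = 4) ∨ (a = 2 ∧ b = 5) ∨ (a = 3 ∧ b = 6))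

/-- The whipping top, with vertices v0 = 0, v1 = 1, v2 = 2, v3 = 3, x1 = 4, x2 = 5,
x3 = 6: the path x1-v1-v2-v3-x3, with v0 adjacent to x1, v1, v2, v3, x3 and x2
adjacent exactly to v2. -/
def whippingTop : SimpleGraph (Fin 7) :=
  SimpleGraph.fromRel (fun a b =>
    (a = 4 ∧ b = 1) ∨ (a = 1 ∧ b = 2) ∨ (a = 2 ∧ b = 3) ∨ (a = 3 ∧ b = 6) ∨
    (a = 0 ∧ (b = 4 ∨ b = 1 ∨ b = 2 ∨ b = 3 ∨ b = 6)) ∨ (a = 5 ∧ b = 2))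

/-- The † graph on `p + 4` vertices: an induced path `v_1 … v_p` (the `inl` vertices),
a vertex `u0 = inr 0` adjacent to all `v_i`, and vertices `x1 = inr 1`, `x2 = inr 2`,
`x3 = inr 3` adjacent exactly to `v_1`, `u0`, `v_p` respectively. -/
def dagGraph (p : ℕ) : SimpleGraph (Fin p ⊕ Fin 4) :=
  SimpleGraph.fromRel (fun a b =>
    match a, b with
    | Sum.inl i, Sum.inl j => j.val = i.val + 1
    | Sum.inr u, Sum.inl j => u = 0 ∨ (u = 1 ∧ j.val = 0) ∨ (u = 3 ∧ j.val + 1 = p)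
    | Sum.inr u, Sum.inr w => u = 0 ∧ w = 2
    | _, _ => False)

/-- The ‡ graph on `p + 5` vertices: an induced path `v_1 … v_p` (the `inl` vertices),
adjacent vertices `u1 = inr 0` and `u2 = inr 1` each adjacent to all `v_i`, and
vertices `x1 = inr 2` (adjacent exactly to `v_1, u1`), `x2 = inr 3` (adjacent exactly
to `u1, u2`) and `x3 = inr 4` (adjacent exactly to `v_p, u2`). -/
def ddagGraph (p : ℕ) : SimpleGraph (Fin p ⊕ Fin 5) :=
  SimpleGraph.fromRel (fun a b =>
    match a, b with
    | Sum.inl i, Sum.inl j => j.val = i.val + 1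
    | Sum.inr u, Sum.inl j =>
        u = 0 ∨ u = 1 ∨ (u = 2 ∧ j.val = 0) ∨ (u = 4 ∧ j.val + 1 = p)
    | Sum.inr u, Sum.inr w =>
        (u = 0 ∧ w = 1) ∨ (u = 2 ∧ w = 0) ∨ (u = 3 ∧ (w = 0 ∨ w = 1)) ∨ (u = 4 ∧ w = 1)
    | _, _ => False)

/-- A graph is a minimal non-interval graph iff it is isomorphic to a hole, the long
claw, the whipping top, a † graph, or a ‡ graph. -/
def IsMinimalNonIntervalGraph {W : Type*} (F : SimpleGraph W) : Prop :=
  (∃ n : ℕ, 4 ≤ n ∧ Nonempty (F ≃g cycleG n)) ∨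
  Nonempty (F ≃g longClaw) ∨
  Nonempty (F ≃g whippingTop) ∨
  (∃ p : ℕ, 2 ≤ p ∧ Nonempty (F ≃g dagGraph p)) ∨
  (∃ p : ℕ, 1 ≤ p ∧ Nonempty (F ≃g ddagGraph p))

/-- The `k`-sun: the `inl` vertices form a clique (the even-numbered vertices of the
cycle of length `2k`), the `inr` vertices are independent, and `inr j` is adjacent to
`inl j` and `inl ((j+1) mod k)`. -/
def sunGraph (k : ℕ) : SimpleGraph (Fin k ⊕ Fin k) :=
  SimpleGraph.fromRel (fun a b =>
    match a, b with
    | Sum.inl _, Sum.inl _ => True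
    | Sum.inl i, Sum.inr j => i = j ∨ i.val = (j.val + 1) % k
    | _, _ => False)

/-- The graph `\overline{S_k}^+`: the complement of the `k`-sun together with a new
vertex (`none`) adjacent exactly to the `k` vertices forming a clique in the
complement (the `inr` vertices). -/
def sunComplPlus (k : ℕ) : SimpleGraph (Option (Fin k ⊕ Fin k)) :=
  SimpleGraph.fromRel (fun a b =>
    match a, b with
    | some x, some y => (sunGraph k)ᶜ.Adj x y
    | some (Sum.inr _), none => True
    | _, _ => False)

/-- The graph `S^1_k`: the disjoint union of a sun and the gadget `D_k`, with two
triangle vertices of the sun identified with `v_1` and `v_k` of the gadget, plus all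
edges between `{v_2, …, v_{k-1}}` and the four remaining sun vertices.  Here the
`inl` vertices are the gadget clique `v_1 … v_k` (0-based), `inr (inl a)` is the
gadget independent vertex `w_{a+1}`, and `inr (inr t)` for `t = 0,1,2,3` are the
third triangle vertex, and the three degree-two sun vertices adjacent (in the sun) to
`{v_1,v_k}`, `{v_1,t}`, `{v_k,t}` respectively. -/
def S1 (k : ℕ) : SimpleGraph (Fin k ⊕ (Fin (k - 1) ⊕ Fin 4)) :=
  SimpleGraph.fromRel (fun x y =>
    match x, y with
    | Sum.inl _, Sum.inl _ => True
    | Sum.inr (Sum.inl a), Sum.inl b => b.val ≠ a.val ∧ b.val ≠ a.val + 1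
    | Sum.inr (Sum.inr t), Sum.inl b =>
        t = 0 ∨ t = 1 ∨ (t = 2 ∧ b.val + 1 ≠ k) ∨ (t = 3 ∧ b.val ≠ 0)
    | Sum.inr (Sum.inr t), Sum.inr (Sum.inr t') => t = 0 ∧ (t' = 2 ∨ t' = 3)
    | _, _ => False)

/-- The graph `S^2_k`: the disjoint union of a rising sun and the gadget `D_k`, with
the two degree-five vertices of the rising sun identified with `v_1` and `v_k` of the
gadget, plus all edges between `{v_2, …, v_{k-1}}` and the five remaining rising-sun
vertices.  Here the `inl` vertices are the gadget clique `v_1 … v_k` (0-based),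
`inr (inl a)` is the gadget independent vertex `w_{a+1}`, and `inr (inr t)` for
`t = 0,…,4` are `d1`, `d2`, `x1`, `x2`, `x3` of the rising sun. -/
def S2 (k : ℕ) : SimpleGraph (Fin k ⊕ (Fin (k - 1) ⊕ Fin 5)) :=
  SimpleGraph.fromRel (fun x y =>
    match x, y with
    | Sum.inl _, Sum.inl _ => True
    | Sum.inr (Sum.inl a), Sum.inl b => b.val ≠ a.val ∧ b.val ≠ a.val + 1
    | Sum.inr (Sum.inr t), Sum.inl b =>
        t = 0 ∨ t = 1 ∨ (t = 2 ∧ b.val + 1 ≠ k) ∨ t = 3 ∨ (t = 4 ∧ b.val ≠ 0)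
    | Sum.inr (Sum.inr t), Sum.inr (Sum.inr t') =>
        (t = 0 ∧ t' = 1) ∨ (t = 0 ∧ t' = 2) ∨ (t = 1 ∧ t' = 4)
    | _, _ => False)

/-- The graph `F1` on 10 vertices: a clique `{0,1,2,3}` (= `v0,…,v3`), vertices
`x1 = 4, x2 = 5, x3 = 6` where `x_i` is adjacent exactly to `v0` and the two `v_j`
with `j ∈ {1,2,3} \ {i}`, and vertices `w1 = 7, w2 = 8, w3 = 9` where `w_i` is
adjacent exactly to the two `v_j` with `j ∈ {1,2,3} \ {i}`. -/
def F1 : SimpleGraph (Fin 10) :=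
  SimpleGraph.fromRel (fun a b =>
    (a.val < 4 ∧ b.val < 4) ∨
    (a = 4 ∧ (b = 0 ∨ b = 2 ∨ b = 3)) ∨
    (a = 5 ∧ (b = 0 ∨ b = 1 ∨ b = 3)) ∨
    (a = 6 ∧ (b = 0 ∨ b = 1 ∨ b = 2)) ∨
    (a = 7 ∧ (b = 2 ∨ b = 3)) ∨
    (a = 8 ∧ (b = 1 ∨ b = 3)) ∨
    (a = 9 ∧ (b = 1 ∨ b = 2)))

/-- The graph `F2` on 9 vertices: a clique `{0,1,2,3}` (= `v0,…,v3`) together with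
`x1 = 4` adjacent exactly to `v2, v3`; `x2 = 5` adjacent exactly to `v0, v1, v3`;
`x3 = 6` adjacent exactly to `v1, v2`; `w1 = 7` adjacent exactly to `v3`; and
`w2 = 8` adjacent exactly to `v1`. -/
def F2 : SimpleGraph (Fin 9) :=
  SimpleGraph.fromRel (fun a b =>
    (a.val < 4 ∧ b.val < 4) ∨
    (a = 4 ∧ (b = 2 ∨ b = 3)) ∨
    (a = 5 ∧ (b = 0 ∨ b = 1 ∨ b = 3)) ∨
    (a = 6 ∧ (b = 1 ∨ b = 2)) ∨
    (a = 7 ∧ b = 3) ∨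
    (a = 8 ∧ b = 1))

/-- The net plus an isolated vertex: triangle `0,1,2`, pendant vertices `3,4,5`
attached to `0,1,2` respectively, and an isolated vertex `6`. -/
def netStar : SimpleGraph (Fin 7) :=
  SimpleGraph.fromRel (fun a b =>
    (a = 0 ∧ b = 1) ∨ (a = 0 ∧ b = 2) ∨ (a = 1 ∧ b = 2) ∨
    (a = 3 ∧ b = 0) ∨ (a = 4 ∧ b = 1) ∨ (a = 5 ∧ b = 2))

/-- The graph `W`: the complement of the 4-sun — a clique `0,1,2,3` (= `v1,…,v4`)
plus an independent set `4,5,6,7` (= `u1,…,u4`) with `u_i` adjacent exactly to `v_i`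
and `v_{i+1 mod 4}` — together with a new vertex `8` adjacent exactly to `v1 = 0` and
`v3 = 2`. -/
def Wgraph : SimpleGraph (Fin 9) :=
  SimpleGraph.fromRel (fun a b =>
    (a.val < 4 ∧ b.val < 4) ∨
    (4 ≤ a.val ∧ a.val ≤ 7 ∧ (b.val = a.val - 4 ∨ b.val = (a.val - 4 + 1) % 4)) ∨
    (a = 8 ∧ (b = 0 ∨ b = 2)))

/-- A clique path of a graph `H`: a linear ordering `K_1, …, K_len` of all maximal
cliques of `H` such that for every vertex the cliques containing it are consecutive.
Indices outside `[1, len]` carry the empty set (sentinels). -/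
structure CliquePath (H : SimpleGraph V) where
  len : ℕ
  Kc : ℕ → Set V
  sentinel : ∀ i : ℕ, (i = 0 ∨ len < i) → Kc i = ∅
  maxclique : ∀ i : ℕ, 1 ≤ i → i ≤ len → IsMaxCliqueSet H (Kc i)
  surj : ∀ C : Set V, IsMaxCliqueSet H C → ∃ i, 1 ≤ i ∧ i ≤ len ∧ Kc i = C
  inj : ∀ i j : ℕ, 1 ≤ i → i ≤ len → 1 ≤ j → j ≤ len → Kc i = Kc j → i = j
  consec : ∀ (v : V) (i j k : ℕ), i ≤ j → j ≤ k → v ∈ Kc i → v ∈ Kc k → v ∈ Kc j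

/-- A module of a graph: every vertex outside is adjacent to all of it or none of it. -/
def GraphModule (H : SimpleGraph V) (M : Set V) : Prop :=
  ∀ u ∈ M, ∀ v ∈ M, ∀ x ∉ M, (H.Adj x u ↔ H.Adj x v)

/-- A graph is quasi-prime if every nontrivial module is a clique. -/
def QuasiPrime (H : SimpleGraph V) : Prop :=
  ∀ M : Set V, GraphModule H M → M ≠ Set.univ → ¬ M.Subsingleton → H.IsClique M


/-!
An ambiguous split graph has a split partition `K ⊎ S` in which some `v ∈ K` has no neighbour
in `S`: if a vertex of `K₁` lies in `S₂` and has a neighbour `s ∈ S₁`, then `s` joins `K₁`.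
In a circular-arc model, cutting the circle at the start of the arc of `v` orders the pairwise
disjoint arcs of `S` linearly, and every `u ∈ K`, whose arc meets that of `v`, misses an
interval of `S` in this order. Conversely, such an order yields a Helly model: the vertices of
`S` become distinct points of `(0, 1)` in this order, and each `u ∈ K` the arc through `0`
avoiding exactly the points of its non-neighbours; every clique then shares the point of its
vertex in `S`, or else `0`.
-/

lemma coe_mem_circleArc_iff {s ℓ t : ℝ} :
    (t : Circle) ∈ circleArc s ℓ ↔ ∃ k : ℤ, t + k ∈ Set.Icc s (s + ℓ) := by
  refine ⟨?_, fun ⟨k, hk⟩ => ⟨t + k, hk, by simp⟩⟩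
  rintro ⟨x, hx, hxt⟩
  obtain ⟨k, hk⟩ := AddSubgroup.mem_zmultiples_iff.1 (QuotientAddGroup.eq_iff_sub_mem.1 hxt)
  rw [zsmul_eq_mul, mul_one] at hk
  exact ⟨k, by rwa [hk, add_sub_cancel]⟩

lemma circleArc_add_intCast (s ℓ : ℝ) (k : ℤ) : circleArc (s + k) ℓ = circleArc s ℓ := by
  ext z
  obtain ⟨t, rfl⟩ := QuotientAddGroup.mk_surjective z
  simp only [coe_mem_circleArc_iff, Set.mem_Icc]
  refine ⟨fun ⟨j, hj⟩ => ⟨j - k, ?_⟩, fun ⟨j, hj⟩ => ⟨j + k, ?_⟩⟩ <;> push_cast <;>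
    constructor <;> linarith [hj.1, hj.2]

lemma circleArc_zero (s : ℝ) : circleArc s 0 = {(s : Circle)} := by
  rw [circleArc, add_zero, Set.Icc_self, Set.image_singleton]

lemma circleArc_inter_nonempty_iff {s ℓ s' ℓ' : ℝ} (hℓ : 0 ≤ ℓ) (hℓ' : 0 ≤ ℓ') :
    (circleArc s ℓ ∩ circleArc s' ℓ').Nonempty ↔
      ∃ k : ℤ, s ≤ s' + k + ℓ' ∧ s' + k ≤ s + ℓ := by
  constructor
  · rintro ⟨_, ⟨x, hx, rfl⟩, hx'⟩
    obtain ⟨k, hk⟩ := coe_mem_circleArc_iff.1 hx'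
    simp only [Set.mem_Icc] at hx hk
    exact ⟨-k, by push_cast; constructor <;> linarith [hx.1, hx.2, hk.1, hk.2]⟩
  · rintro ⟨k, h₁, h₂⟩
    rw [← circleArc_add_intCast s' ℓ' k]
    refine ⟨(max s (s' + k) : ℝ), ⟨_, ⟨le_max_left _ _, ?_⟩, rfl⟩,
      ⟨_, ⟨le_max_right _ _, ?_⟩, rfl⟩⟩
    · exact max_le (by linarith) h₂
    · exact max_le h₁ (by linarith)

lemma CircularArcModel.exists_start_mem_Ico {G : SimpleGraph V} (M : CircularArcModel G)
    (b : ℝ) (w : V) :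
    ∃ s ℓ : ℝ, s ∈ Set.Ico b (b + 1) ∧ 0 ≤ ℓ ∧ M.arc w = circleArc s ℓ := by
  obtain ⟨s, ℓ, hℓ, h⟩ := M.isArc w
  refine ⟨s + (-⌊s - b⌋ : ℤ), ℓ, ?_, hℓ, by rw [circleArc_add_intCast, h]⟩
  have h₁ := Int.fract_nonneg (s - b)
  have h₂ := Int.fract_lt_one (s - b)
  rw [Int.fract] at h₁ h₂
  push_cast
  constructor <;> linarith

lemma coe_mem_circleArc_iff_notMem_Ioo {x y t : ℝ} (hx : 0 ≤ x) (hy : y ≤ 1)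
    (ht : t ∈ Set.Ico 0 1) : (t : Circle) ∈ circleArc y (1 + x - y) ↔ t ∉ Set.Ioo x y := by
  rw [coe_mem_circleArc_iff]
  simp only [Set.mem_Icc, Set.mem_Ioo, Set.mem_Ico, not_and_or, not_lt] at ht ⊢
  constructor
  · rintro ⟨k, hk₁, hk₂⟩
    rcases le_or_gt k 0 with hk | hk
    · have : (k : ℝ) ≤ 0 := by exact_mod_cast hk
      exact Or.inr (by linarith)
    · have : (1 : ℝ) ≤ k := by exact_mod_cast hk
      exact Or.inl (by linarith)
  · rintro (h | h)
    · exact ⟨1, by push_cast; constructor <;> linarith⟩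
    · exact ⟨0, by push_cast; constructor <;> linarith⟩

namespace IsSplitPartition

variable {G : SimpleGraph V} {K S : Set V}

lemma mem_right_iff (hp : IsSplitPartition G K S) {w : V} : w ∈ S ↔ w ∉ K := by
  rw [← (IsCompl.mk hp.2.1 (codisjoint_iff.2 hp.1)).compl_eq, Set.mem_compl_iff]

lemma mem_left_iff (hp : IsSplitPartition G K S) {w : V} : w ∈ K ↔ w ∉ S := by
  rw [hp.mem_right_iff, not_not]

lemma mem_left_of_adj (hp : IsSplitPartition G K S) {u s : V} (hs : s ∈ S) (h : G.Adj u s) :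
    u ∈ K :=
  by_contra fun hu => hp.2.2.2 (hp.mem_right_iff.2 hu) hs h.ne h

lemma insert_diff_singleton (hp : IsSplitPartition G K S) {s : V} (hs : s ∈ S)
    (hadj : ∀ u ∈ K, G.Adj s u) : IsSplitPartition G (insert s K) (S \ {s}) := by
  refine ⟨?_, ?_, ?_, fun x hx y hy => hp.2.2.2 hx.1 hy.1⟩
  · refine Set.eq_univ_of_forall fun w => ?_
    obtain rfl | hne := eq_or_ne w s
    · exact Or.inl (Set.mem_insert w K)
    rcases hp.1 ▸ Set.mem_univ w with hw | hw
    · exact Or.inl (Set.mem_insert_of_mem s hw)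
    · exact Or.inr ⟨hw, hne⟩
  · rw [Set.disjoint_left]
    rintro w (rfl | hw) ⟨hwS, hne⟩
    · exact hne rfl
    · exact hp.mem_right_iff.1 hwS hw
  · exact hp.2.2.1.insert fun u hu _ => hadj u hu

end IsSplitPartition

lemma exists_splitPartition_nonadj_of_mem_diff {G : SimpleGraph V} {K₁ S₁ K₂ S₂ : Set V}
    (h₁ : IsSplitPartition G K₁ S₁) (h₂ : IsSplitPartition G K₂ S₂) {v : V}
    (hv₁ : v ∈ K₁) (hv₂ : v ∉ K₂) :
    ∃ K S w, IsSplitPartition G K S ∧ w ∈ K ∧ ∀ s ∈ S, ¬ G.Adj w s := by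
  obtain ⟨s₀, hs₀, hvs₀⟩ | hv := em (∃ s₀ ∈ S₁, G.Adj v s₀)
  swap
  · exact ⟨K₁, S₁, v, h₁, hv₁, fun s hs h => hv ⟨s, hs, h⟩⟩
  have hvS₂ : v ∈ S₂ := h₂.mem_right_iff.2 hv₂
  have hs₀K₂ : s₀ ∈ K₂ := h₂.mem_left_of_adj hvS₂ hvs₀.symm
  have hs₀K₁ : ∀ u ∈ K₁, G.Adj s₀ u := by
    intro u hu
    obtain rfl | huv := eq_or_ne u v
    · exact hvs₀.symm
    refine h₂.2.2.1 hs₀K₂ (h₂.mem_left_of_adj hvS₂ (h₁.2.2.1 hu hv₁ huv)) ?_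
    rintro rfl
    exact h₁.mem_right_iff.1 hs₀ hu
  exact ⟨_, _, s₀, h₁.insert_diff_singleton hs₀ hs₀K₁, Set.mem_insert _ _,
    fun s hs => h₁.2.2.2 hs₀ hs.1 (Ne.symm hs.2)⟩

lemma Ambiguous.exists_splitPartition_nonadj {G : SimpleGraph V} (ha : Ambiguous G) :
    ∃ K S v, IsSplitPartition G K S ∧ v ∈ K ∧ ∀ s ∈ S, ¬ G.Adj v s := by
  obtain ⟨K₁, S₁, K₂, S₂, h₁, h₂, hne⟩ := ha
  have hK : K₁ ≠ K₂ := by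
    rintro rfl
    refine hne (Prod.ext rfl (Set.ext fun w => ?_))
    rw [h₁.mem_right_iff, h₂.mem_right_iff]
  obtain ⟨v, hv₁, hv₂⟩ | ⟨v, hv₂, hv₁⟩ :
      (K₁ \ K₂).Nonempty ∨ (K₂ \ K₁).Nonempty := by
    by_contra! h
    exact hK (Set.Subset.antisymm (Set.sdiff_eq_empty.1 h.1) (Set.sdiff_eq_empty.1 h.2))
  · exact exists_splitPartition_nonadj_of_mem_diff h₁ h₂ hv₁ hv₂
  · exact exists_splitPartition_nonadj_of_mem_diff h₂ h₁ hv₂ hv₁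

def OrdConnectedOn {α : Type*} [LE α] (c : V → α) (S : Set V) (P : V → Prop) : Prop :=
  ∀ s₁ ∈ S, ∀ s₂ ∈ S, ∀ s₃ ∈ S, c s₁ ≤ c s₂ → c s₂ ≤ c s₃ → P s₁ → P s₃ → P s₂

lemma add_lt_of_not_circleArc_inter_nonempty {s ℓ s' ℓ' : ℝ} (hℓ : 0 ≤ ℓ) (hℓ' : 0 ≤ ℓ')
    (h : ¬ (circleArc s ℓ ∩ circleArc s' ℓ').Nonempty) (hss' : s ≤ s') : s + ℓ < s' := by
  rw [circleArc_inter_nonempty_iff hℓ hℓ'] at h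
  by_contra! h'
  exact h ⟨0, by push_cast; constructor <;> linarith⟩

/- Lifted to `ℝ`, the arc `[α, α + ℓ]` meets arc 2 shifted by some `k : ℤ`; for `k ≥ 0` it
then reaches over arc 1, for `k < 0` over arc 3 shifted by `-1`. -/
lemma circleArc_inter_nonempty_of_between {α ℓ s₁ ℓ₁ s₂ ℓ₂ s₃ ℓ₃ : ℝ} (hℓ : 0 ≤ ℓ)
    (hℓ₁ : 0 ≤ ℓ₁) (hℓ₂ : 0 ≤ ℓ₂) (hℓ₃ : 0 ≤ ℓ₃) (h₁ : α ≤ s₁ + ℓ₁) (h₁₂ : s₁ ≤ s₂)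
    (h₂₃ : s₂ + ℓ₂ ≤ s₃ + ℓ₃) (h₃ : s₃ ≤ α + ℓ + 1)
    (h₂ : (circleArc α ℓ ∩ circleArc s₂ ℓ₂).Nonempty) :
    (circleArc α ℓ ∩ circleArc s₁ ℓ₁).Nonempty ∨
      (circleArc α ℓ ∩ circleArc s₃ ℓ₃).Nonempty := by
  rw [circleArc_inter_nonempty_iff hℓ hℓ₁, circleArc_inter_nonempty_iff hℓ hℓ₃]
  obtain ⟨k, hk₁, hk₂⟩ := (circleArc_inter_nonempty_iff hℓ hℓ₂).1 h₂
  rcases le_or_gt 0 k with hk | hk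
  · have : (0 : ℝ) ≤ k := by exact_mod_cast hk
    exact Or.inl ⟨0, by push_cast; constructor <;> linarith⟩
  · have : (k : ℝ) ≤ -1 := by exact_mod_cast Int.le_sub_one_of_lt hk
    exact Or.inr ⟨-1, by push_cast; constructor <;> linarith⟩

lemma CircularArcModel.exists_ordConnectedOn {G : SimpleGraph V} (M : CircularArcModel G)
    {K S : Set V} (hp : IsSplitPartition G K S) {v : V} (hvK : v ∈ K)
    (hv : ∀ s ∈ S, ¬ G.Adj v s) :
    ∃ c : V → ℝ, Set.InjOn c S ∧ ∀ u ∈ K, OrdConnectedOn c S fun s => ¬ G.Adj u s := by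
  obtain ⟨b, ℓv, hℓv, hvarc⟩ := M.isArc v
  choose c ℓ hc hℓ harc using M.exists_start_mem_Ico b
  have hKS {u s : V} (hu : u ∈ K) (hs : s ∈ S) : u ≠ s :=
    fun h => hp.mem_right_iff.1 (h ▸ hs) hu
  have hvS {s : V} (hs : s ∈ S) : b + ℓv < c s := by
    refine add_lt_of_not_circleArc_inter_nonempty hℓv (hℓ s) ?_ (hc s).1
    rw [← hvarc, ← harc, ← M.adj_iff v s (hKS hvK hs)]
    exact hv s hs
  have hSS {s s' : V} (hs : s ∈ S) (hs' : s' ∈ S) (hne : s ≠ s') (h : c s ≤ c s') :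
      c s + ℓ s < c s' := by
    refine add_lt_of_not_circleArc_inter_nonempty (hℓ s) (hℓ s') ?_ h
    rw [← harc, ← harc, ← M.adj_iff s s' hne]
    exact hp.2.2.2 hs hs' hne
  have hend {s s' : V} (hs : s ∈ S) (hs' : s' ∈ S) (h : c s ≤ c s') :
      c s + ℓ s ≤ c s' + ℓ s' := by
    obtain rfl | hne := eq_or_ne s s'
    · exact le_rfl
    · linarith [hSS hs hs' hne h, hℓ s']
  refine ⟨c, fun s hs s' hs' h => by_contra fun hne => ?_, ?_⟩
  · linarith [hSS hs hs' hne h.le, hℓ s]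
  intro u hu s₁ hs₁ s₂ hs₂ s₃ hs₃ h₁₂ h₂₃ hn₁ hn₃ hadj₂
  obtain rfl | huv := eq_or_ne u v
  · exact hv s₂ hs₂ hadj₂
  have huv' := (M.adj_iff u v huv).1 (hp.2.2.1 hu hvK huv)
  rw [harc, hvarc, circleArc_inter_nonempty_iff (hℓ u) hℓv] at huv'
  obtain ⟨k, hk₁, hk₂⟩ := huv'
  have adj_iff {s : V} (hs : s ∈ S) :
      G.Adj u s ↔ (circleArc (c u + (-k : ℤ)) (ℓ u) ∩ circleArc (c s) (ℓ s)).Nonempty := by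
    rw [M.adj_iff u s (hKS hu hs), circleArc_add_intCast, ← harc, ← harc]
  rw [adj_iff hs₁] at hn₁
  rw [adj_iff hs₃] at hn₃
  refine (circleArc_inter_nonempty_of_between (hℓ u) (hℓ s₁) (hℓ s₂) (hℓ s₃) ?_ h₁₂
    (hend hs₂ hs₃ h₂₃) ?_ ((adj_iff hs₂).1 hadj₂)).elim hn₁ hn₃
  · push_cast
    linarith [hvS hs₁, hℓ s₁]
  · push_cast
    linarith [(hc s₃).2]

lemma exists_nat_le_iff [Fintype V] {α : Type*} [LinearOrder α] (c : V → α) :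
    ∃ f : V → ℕ, (∀ x, f x < Fintype.card V) ∧ ∀ x y, f x ≤ f y ↔ c x ≤ c y := by
  classical
  refine ⟨fun x => (Finset.univ.filter fun y => c y < c x).card, fun x => ?_,
    fun x y => ⟨fun h => ?_, fun h => ?_⟩⟩
  · exact Finset.card_lt_univ_of_notMem (x := x) (by simp)
  · by_contra! hyx
    refine (Finset.card_lt_card ⟨fun z hz => ?_, fun hsub => ?_⟩).not_ge h
    · simp only [Finset.mem_filter, Finset.mem_univ, true_and] at hz ⊢
      exact hz.trans hyx
    · simpa using hsub (Finset.mem_filter.2 ⟨Finset.mem_univ y, hyx⟩)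
  · exact Finset.card_le_card fun z hz => by
      simp only [Finset.mem_filter, Finset.mem_univ, true_and] at hz ⊢
      exact hz.trans_le h

lemma OrdConnectedOn.exists_Ico {f : V → ℕ} {S : Set V} {P : V → Prop} {N : ℕ}
    (hf : ∀ s ∈ S, f s < N) (hP : OrdConnectedOn f S P) :
    ∃ a b : ℕ, b ≤ N ∧ ∀ s ∈ S, P s ↔ f s ∈ Set.Ico a b := by
  set T := f '' {s | s ∈ S ∧ P s}
  obtain hT | hT := T.eq_empty_or_nonempty
  · refine ⟨0, 0, Nat.zero_le N, fun s hs => ?_⟩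
    simp only [Set.Ico_self, Set.mem_empty_iff_false, iff_false]
    exact fun h => hT.subset ⟨s, ⟨hs, h⟩, rfl⟩
  have hTN : T ⊆ Set.Iio N := by
    rintro _ ⟨s, ⟨hs, -⟩, rfl⟩
    exact hf s hs
  have hTfin : T.Finite := (Set.finite_Iio N).subset hTN
  obtain ⟨s₁, ⟨hs₁, hP₁⟩, h₁⟩ := csInf_mem hT
  obtain ⟨s₃, ⟨hs₃, hP₃⟩, h₃⟩ := hT.csSup_mem hTfin
  refine ⟨sInf T, sSup T + 1, hTN (hT.csSup_mem hTfin), fun s hs => ⟨fun h => ?_, fun h => ?_⟩⟩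
  · have hsT : f s ∈ T := ⟨s, ⟨hs, h⟩, rfl⟩
    exact ⟨csInf_le (OrderBot.bddBelow T) hsT, Nat.lt_succ_of_le (le_csSup hTfin.bddAbove hsT)⟩
  · exact hP s₁ hs₁ s hs s₃ hs₃ (h₁ ▸ h.1) (h₃ ▸ Nat.le_of_lt_succ h.2) hP₁ hP₃

lemma isHellyCircularArcGraph_of_gaps {G : SimpleGraph V} {K S : Set V}
    (hp : IsSplitPartition G K S) (p x y : V → ℝ) (hpS : Set.MapsTo p S (Set.Ico 0 1))
    (hinj : Set.InjOn p S) (hx : ∀ u ∈ K, 0 ≤ x u) (hy : ∀ u ∈ K, y u ≤ 1)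
    (hadj : ∀ u ∈ K, ∀ s ∈ S, G.Adj u s ↔ p s ∉ Set.Ioo (x u) (y u)) :
    IsHellyCircularArcGraph G := by
  classical
  let arc (w : V) : Set Circle :=
    if w ∈ S then circleArc (p w) 0 else circleArc (y w) (1 + x w - y w)
  have arc_S {s : V} (hs : s ∈ S) : arc s = {(p s : Circle)} := by
    simp only [arc, if_pos hs, circleArc_zero]
  have arc_K {u : V} (hu : u ∈ K) : arc u = circleArc (y u) (1 + x u - y u) :=
    if_neg (hp.mem_left_iff.1 hu)
  have zero_mem {u : V} (hu : u ∈ K) : ((0 : ℝ) : Circle) ∈ arc u := by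
    rw [arc_K hu, coe_mem_circleArc_iff_notMem_Ioo (hx u hu) (hy u hu) ⟨le_rfl, one_pos⟩]
    exact fun h => (hx u hu).not_gt h.1
  have mem_arc {u s : V} (hu : u ∈ K) (hs : s ∈ S) : (p s : Circle) ∈ arc u ↔ G.Adj u s := by
    rw [arc_K hu, coe_mem_circleArc_iff_notMem_Ioo (hx u hu) (hy u hu) (hpS hs), hadj u hu s hs]
  have adj_iff_KS {u s : V} (hu : u ∈ K) (hs : s ∈ S) :
      G.Adj u s ↔ (arc u ∩ arc s).Nonempty := by
    rw [arc_S hs, Set.inter_singleton_nonempty, mem_arc hu hs]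
  refine ⟨⟨arc, fun w => ?_, fun u w huw => ?_⟩, fun C hC => ?_⟩
  · by_cases hw : w ∈ S
    · exact ⟨p w, 0, le_rfl, if_pos hw⟩
    · have hwK := hp.mem_left_iff.2 hw
      exact ⟨y w, 1 + x w - y w, by linarith [hx w hwK, hy w hwK], if_neg hw⟩
  · by_cases hu : u ∈ S <;> by_cases hw : w ∈ S
    · refine iff_of_false (hp.2.2.2 hu hw huw) ?_
      rw [arc_S hu, arc_S hw, Set.singleton_inter_nonempty, Set.mem_singleton_iff,
        AddCircle.coe_eq_coe_iff_of_mem_Ico (a := 0) (by simpa using hpS hu)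
          (by simpa using hpS hw)]
      exact hinj.ne hu hw huw
    · rw [G.adj_comm, Set.inter_comm]
      exact adj_iff_KS (hp.mem_left_iff.2 hw) hu
    · exact adj_iff_KS (hp.mem_left_iff.2 hu) hw
    · have hu := hp.mem_left_iff.2 hu
      have hw := hp.mem_left_iff.2 hw
      exact iff_of_true (hp.2.2.1 hu hw huw) ⟨_, zero_mem hu, zero_mem hw⟩
  · by_cases hCS : ∃ s ∈ C, s ∈ S
    · obtain ⟨s, hsC, hs⟩ := hCS
      refine ⟨p s, fun w hw => ?_⟩
      obtain rfl | hws := eq_or_ne w s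
      · change (p w : Circle) ∈ arc w
        rw [arc_S hs]
        exact Set.mem_singleton _
      have hadj := hC.1 hw hsC hws
      exact (mem_arc (hp.mem_left_of_adj hs hadj) hs).2 hadj
    · push Not at hCS
      exact ⟨_, fun w hw => zero_mem (hp.mem_left_iff.2 (hCS w hw))⟩

lemma natCast_add_half_mem_Ioo_iff {a b n : ℕ} :
    (n + 1 / 2 : ℝ) ∈ Set.Ioo (a : ℝ) b ↔ n ∈ Set.Ico a b := by
  simp only [Set.mem_Ioo, Set.mem_Ico]
  constructor
  · rintro ⟨h₁, h₂⟩
    have h₁' : (a : ℝ) < n + 1 := by linarith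
    have h₂' : (n : ℝ) < b := by linarith
    exact ⟨Nat.lt_succ_iff.1 (by exact_mod_cast h₁'), by exact_mod_cast h₂'⟩
  · rintro ⟨h₁, h₂⟩
    have h₁' : (a : ℝ) ≤ n := by exact_mod_cast h₁
    have h₂' : (n : ℝ) + 1 ≤ b := by exact_mod_cast h₂
    constructor <;> linarith

lemma isHellyCircularArcGraph_of_ordConnectedOn [Fintype V] {G : SimpleGraph V} {K S : Set V}
    (hp : IsSplitPartition G K S) {α : Type*} [LinearOrder α] (c : V → α)
    (hinj : Set.InjOn c S) (hconv : ∀ u ∈ K, OrdConnectedOn c S fun s => ¬ G.Adj u s) :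
    IsHellyCircularArcGraph G := by
  obtain ⟨f, hfN, hf⟩ := exists_nat_le_iff c
  set N := Fintype.card V
  have hconv' (u : V) : OrdConnectedOn f S fun s => ¬ G.Adj u s := by
    intro s₁ hs₁ s₂ hs₂ s₃ hs₃ h₁₂ h₂₃
    by_cases hu : u ∈ S
    · exact fun _ _ h => hp.2.2.2 hu hs₂ h.ne h
    · exact hconv u (hp.mem_left_iff.2 hu) s₁ hs₁ s₂ hs₂ s₃ hs₃ ((hf _ _).1 h₁₂) ((hf _ _).1 h₂₃)
  choose a b hbN hab using fun u => (hconv' u).exists_Ico fun s _ => hfN s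
  have hN (s : V) : (0 : ℝ) < N := by exact_mod_cast (hfN s).trans_le' (Nat.zero_le _)
  -- Points at half-integers and gap ends at integers, all over `N`, so the gaps are exact.
  refine isHellyCircularArcGraph_of_gaps hp (fun s => (f s + 1 / 2) / N) (fun u => a u / N)
    (fun u => b u / N) (fun s _ => ⟨by positivity, ?_⟩) (fun s hs s' hs' h => ?_)
    (fun u _ => by positivity)
    (fun u _ => div_le_one_of_le₀ (by exact_mod_cast hbN u) N.cast_nonneg)
    (fun u _ s hs => ?_)
  · rw [div_lt_one (hN s)]
    have : (f s : ℝ) + 1 ≤ N := by exact_mod_cast hfN s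
    linarith
  · rw [div_left_inj' (hN s).ne', add_left_inj, Nat.cast_inj] at h
    exact hinj hs hs' (le_antisymm ((hf _ _).1 h.le) ((hf _ _).1 h.ge))
  · rw [← not_iff_not, not_not, hab u s hs, ← natCast_add_half_mem_Ioo_iff]
    simp only [Set.mem_Ioo, div_lt_div_iff_of_pos_right (hN s)]

theorem statement7_general {V : Type*} [Fintype V] (G : SimpleGraph V) (ha : Ambiguous G) :
    IsHellyCircularArcGraph G ↔ IsCircularArcGraph G := by
  refine ⟨fun ⟨M, _⟩ => ⟨M⟩, fun ⟨M⟩ => ?_⟩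
  obtain ⟨K, S, v, hp, hvK, hv⟩ := ha.exists_splitPartition_nonadj
  obtain ⟨c, hinj, hconv⟩ := M.exists_ordConnectedOn hp hvK hv
  exact isHellyCircularArcGraph_of_ordConnectedOn hp c hinj hconv

/-- An ambiguous split graph is a Helly circular-arc graph iff it is
a circular-arc graph. -/
theorem statement7 {V : Type*} [Fintype V] (G : SimpleGraph V) (hG : IsSplitGraph G)
    (ha : Ambiguous G) :
    IsHellyCircularArcGraph G ↔ IsCircularArcGraph G :=
  statement7_general G ha

end CAG
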